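/- Suppose F = F₀ + F₁ where F₁ satisfies the strong convexity estimate F₁((u+w)/2) ≤ (1/2)F₁(u) + (1/2)F₁(w) − (χ/4)‖u−w‖² with χ > 0, and F₀ satisfies the reverse midpoint estimate |F₀((u+w)/2) − (1/2)F₀(u) − (1/2)F₀(w)| ≤ (χ₁/4)‖u−w‖² with 0 ≤ χ₁ < χ, on a convex set V. Then F satisfies the strong convexity estimate F((u+w)/2) ≤ (1/2)F(u) + (1/2)F(w) − ((χ−χ₁)/4)‖u−w‖² on V; in particular any minimizing sequence of F over V is Cauchy. -/
import Mathlib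


/-- A strongly midpoint-convex term plus a mildly nonconvex perturbation is still
strongly midpoint-convex with constant `χ - χ₁`; in particular minimizing
sequences of the sum are Cauchy. -/
theorem strong_midpoint_convex_of_perturbation
    {H : Type*} [NormedAddCommGroup H] [InnerProductSpace ℝ H] [CompleteSpace H]
    (V : Set H) (hVconv : Convex ℝ V)
    (F₀ F₁ : H → ℝ) (χ χ₁ : ℝ) (hχ : 0 < χ) (hχ₁ : 0 ≤ χ₁) (hlt : χ₁ < χ)
    (hF₁ : ∀ u ∈ V, ∀ w ∈ V,
      F₁ (midpoint ℝ u w) ≤ F₁ u / 2 + F₁ w / 2 - χ / 4 * ‖u - w‖ ^ 2)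
    (hF₀ : ∀ u ∈ V, ∀ w ∈ V,
      |F₀ (midpoint ℝ u w) - F₀ u / 2 - F₀ w / 2| ≤ χ₁ / 4 * ‖u - w‖ ^ 2) :
    (∀ u ∈ V, ∀ w ∈ V,
      (F₀ + F₁) (midpoint ℝ u w) ≤ (F₀ + F₁) u / 2 + (F₀ + F₁) w / 2
        - (χ - χ₁) / 4 * ‖u - w‖ ^ 2) ∧
    (∀ v : ℕ → H, (∀ n, v n ∈ V) → BddBelow ((F₀ + F₁) '' V) →
      Filter.Tendsto (fun n => (F₀ + F₁) (v n)) Filter.atTop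
        (nhds (sInf ((F₀ + F₁) '' V))) →
      CauchySeq v) := by
  have key : ∀ u ∈ V, ∀ w ∈ V,
      (F₀ + F₁) (midpoint ℝ u w) ≤ (F₀ + F₁) u / 2 + (F₀ + F₁) w / 2
        - (χ - χ₁) / 4 * ‖u - w‖ ^ 2 := by
    intro u hu w hw
    have h1 := hF₁ u hu w hw
    have h0 := (abs_le.mp (hF₀ u hu w hw)).2
    simp only [Pi.add_apply]
    linarith
  refine ⟨key, ?_⟩
  intro v hv hbdd htend
  set F := F₀ + F₁ with hF
  set m := sInf (F '' V) with hm
  rw [Metric.cauchySeq_iff]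
  intro ε hε
  set c : ℝ := (χ - χ₁) / 4 with hc
  have hcpos : 0 < c := by rw [hc]; linarith
  have hε' : m < m + c * ε ^ 2 := by nlinarith [mul_pos hcpos (pow_pos hε 2)]
  have hev : ∀ᶠ n in Filter.atTop, F (v n) < m + c * ε ^ 2 :=
    htend (Iio_mem_nhds hε')
  obtain ⟨N, hN⟩ := Filter.eventually_atTop.mp hev
  refine ⟨N, fun n hn k hk => ?_⟩
  have hkey := key (v n) (hv n) (v k) (hv k)
  have hmid : midpoint ℝ (v n) (v k) ∈ V := by
    exact hVconv.segment_subset (hv n) (hv k) (midpoint_mem_segment _ _)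
  have hmlow : m ≤ F (midpoint ℝ (v n) (v k)) :=
    csInf_le hbdd ⟨_, hmid, rfl⟩
  have h1 := hN n hn
  have h2 := hN k hk
  have hsq : ‖v n - v k‖ ^ 2 < ε ^ 2 := by nlinarith
  have : ‖v n - v k‖ < ε := by nlinarith [norm_nonneg (v n - v k)]
  simpa [dist_eq_norm] using this
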